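/- arXiv:2604.11254 — 5 statements merged into one kernel-verified Lean document; each statement's English description precedes it below -/
import Mathlib

section
/- Antipodal symmetry of the forward Finsler distance (Lemma 1, first identity): If the cost function C is antipodally symmetric, then for all points p₀, p₁ of the space of positions and orientations one has d_F₀⁺(p₀, p₁) = d_F₀⁺(p̄₁, p̄₀). -/
open Set MeasureTheory
open scoped ENNReal

noncomputable section

/-- The orientation vector `n(θ) = (cos θ, sin θ)`. -/
def nvec (θ : ℝ) : ℝ × ℝ := (Real.cos θ, Real.sin θ)

/-- Euclidean dot product on `ℝ × ℝ`. -/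
def dot (a b : ℝ × ℝ) : ℝ := a.1 * b.1 + a.2 * b.2

/-- Euclidean norm on `ℝ × ℝ`. -/
def enorm2 (v : ℝ × ℝ) : ℝ := Real.sqrt (v.1 ^ 2 + v.2 ^ 2)

/-- A point of the space of positions and orientations: a position in `ℝ²`
together with an orientation vector in `ℝ²` (intended to be a unit vector). -/
abbrev Pt := (ℝ × ℝ) × (ℝ × ℝ)

/-- The antipode `p̄ = (x, -n)` of a point `p = (x, n)`. -/
def antipode (p : Pt) : Pt := (p.1, -p.2)

/-- A candidate curve, given by a spatial part `x` and an angular part `θ`. -/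
structure Curve where
  x : ℝ → ℝ × ℝ
  th : ℝ → ℝ

/-- A map is piecewise continuously differentiable on `[0,1]`: it is continuous
on `[0,1]` and, off a finite set, differentiable with continuous derivative. -/
def PiecewiseC1 {E : Type*} [NormedAddCommGroup E] [NormedSpace ℝ E] (f : ℝ → E) : Prop :=
  ContinuousOn f (Icc 0 1) ∧
    ∃ s : Finset ℝ, ∀ t ∈ Icc (0 : ℝ) 1 \ (s : Set ℝ),
      DifferentiableAt ℝ f t ∧ ContinuousAt (deriv f) t

namespace Curve

/-- Both components of the curve are piecewise `C¹`. -/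
def Admissible (γ : Curve) : Prop := PiecewiseC1 γ.x ∧ PiecewiseC1 γ.th

/-- The spatial control `u¹(t) = ẋ(t) ⬝ n(θ(t))`. -/
def u1 (γ : Curve) (t : ℝ) : ℝ := dot (deriv γ.x t) (nvec (γ.th t))

/-- The angular control `u³(t) = θ̇(t)`. -/
def u3 (γ : Curve) (t : ℝ) : ℝ := deriv γ.th t

/-- Horizontality: wherever the spatial derivative exists,
`ẋ(t) ∈ span {n(θ(t))}`. -/
def Horizontal (γ : Curve) : Prop :=
  ∀ t ∈ Icc (0 : ℝ) 1, DifferentiableAt ℝ γ.x t →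
    ∃ c : ℝ, deriv γ.x t = c • nvec (γ.th t)

/-- Boundary conditions: the curve joins `p₀` to `p₁` (the angular boundary
conditions hold modulo `2π`, which is expressed via the orientation vectors). -/
def Joins (γ : Curve) (p₀ p₁ : Pt) : Prop :=
  γ.x 0 = p₀.1 ∧ γ.x 1 = p₁.1 ∧ nvec (γ.th 0) = p₀.2 ∧ nvec (γ.th 1) = p₁.2

end Curve

/-- The length `L(γ) = ∫₀¹ C(x(t), n(θ(t))) √(ξ² u¹(t)² + u³(t)²) dt`. -/
def length (ξ : ℝ) (C : Pt → ℝ) (γ : Curve) : ℝ :=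
  ∫ t in (0 : ℝ)..1,
    C (γ.x t, nvec (γ.th t)) * Real.sqrt (ξ ^ 2 * γ.u1 t ^ 2 + γ.u3 t ^ 2)

/-- `Γ₀(p₀,p₁)`: horizontal admissible candidate curves from `p₀` to `p₁`. -/
def Gamma0 (p₀ p₁ : Pt) : Set Curve :=
  {γ | γ.Admissible ∧ γ.Horizontal ∧ γ.Joins p₀ p₁}

/-- `Γ₀⁺(p₀,p₁)`: members of `Γ₀(p₀,p₁)` with `u¹ ≥ 0` wherever defined. -/
def Gamma0plus (p₀ p₁ : Pt) : Set Curve :=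
  {γ ∈ Gamma0 p₀ p₁ | ∀ t ∈ Icc (0 : ℝ) 1, DifferentiableAt ℝ γ.x t → 0 ≤ γ.u1 t}

/-- `Γ₀⁻(p₀,p₁)`: members of `Γ₀(p₀,p₁)` with `u¹ ≤ 0` wherever defined. -/
def Gamma0minus (p₀ p₁ : Pt) : Set Curve :=
  {γ ∈ Gamma0 p₀ p₁ | ∀ t ∈ Icc (0 : ℝ) 1, DifferentiableAt ℝ γ.x t → γ.u1 t ≤ 0}

/-- The sub-Riemannian distance `d_F₀` (with `inf ∅ = +∞`). -/
def dF0 (ξ : ℝ) (C : Pt → ℝ) (p₀ p₁ : Pt) : ℝ≥0∞ :=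
  ⨅ γ ∈ Gamma0 p₀ p₁, ENNReal.ofReal (length ξ C γ)

/-- The forward (asymmetric) Finsler distance `d_F₀⁺` (with `inf ∅ = +∞`). -/
def dF0plus (ξ : ℝ) (C : Pt → ℝ) (p₀ p₁ : Pt) : ℝ≥0∞ :=
  ⨅ γ ∈ Gamma0plus p₀ p₁, ENNReal.ofReal (length ξ C γ)

/-- The backward Finsler distance `d_F₀⁻` (with `inf ∅ = +∞`). -/
def dF0minus (ξ : ℝ) (C : Pt → ℝ) (p₀ p₁ : Pt) : ℝ≥0∞ :=
  ⨅ γ ∈ Gamma0minus p₀ p₁, ENNReal.ofReal (length ξ C γ)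

/-- The cusp-free model `d_c` on the projective line bundle:
the minimum of `d_F₀⁺` over representatives `q₀ ∈ [p₀] = {p₀, p̄₀}` and
`q₁ ∈ [p₁] = {p₁, p̄₁}`. -/
def dc (ξ : ℝ) (C : Pt → ℝ) (p₀ p₁ : Pt) : ℝ≥0∞ :=
  min (min (dF0plus ξ C p₀ p₁) (dF0plus ξ C p₀ (antipode p₁)))
      (min (dF0plus ξ C (antipode p₀) p₁) (dF0plus ξ C (antipode p₀) (antipode p₁)))

/-- The projective line bundle model `d_proj`:
the minimum of `d_F₀` over representatives of the classes. -/
def dproj (ξ : ℝ) (C : Pt → ℝ) (p₀ p₁ : Pt) : ℝ≥0∞ :=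
  min (min (dF0 ξ C p₀ p₁) (dF0 ξ C p₀ (antipode p₁)))
      (min (dF0 ξ C (antipode p₀) p₁) (dF0 ξ C (antipode p₀) (antipode p₁)))

/-- `Γᶜ([p₀],[p₁])`: curves between representatives of the two classes whose
spatial control has a constant sign (nonnegative or nonpositive everywhere). -/
def GammaC (p₀ p₁ : Pt) : Set Curve :=
  (Gamma0plus p₀ p₁ ∪ Gamma0minus p₀ p₁) ∪
  (Gamma0plus p₀ (antipode p₁) ∪ Gamma0minus p₀ (antipode p₁)) ∪
  (Gamma0plus (antipode p₀) p₁ ∪ Gamma0minus (antipode p₀) p₁) ∪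
  (Gamma0plus (antipode p₀) (antipode p₁) ∪ Gamma0minus (antipode p₀) (antipode p₁))

/-- The cost function `C` is antipodally symmetric. -/
def AntipodallySymmetric (C : Pt → ℝ) : Prop :=
  ∀ x n : ℝ × ℝ, C (x, n) = C (x, -n)

/-- Distance on the circle: `ρ(θ₀, θ₁) = min_{k ∈ ℤ} |θ₁ - θ₀ + 2πk|`. -/
def rho (θ₀ θ₁ : ℝ) : ℝ :=
  sInf (Set.range fun k : ℤ => |θ₁ - θ₀ + 2 * Real.pi * k|)

/-!
Run a curve of `Γ₀⁺(p₀,p₁)` backwards and turn its angle by `π`. The spatial control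
`u¹ = ẋ ⬝ n(θ)` is unchanged because both factors flip sign, the angular control only flips
sign, and antipodal symmetry keeps the cost: the result is a curve of `Γ₀⁺(p̄₁,p̄₀)` of the same
length. Hence `d_F₀⁺(p̄₁,p̄₀) ≤ d_F₀⁺(p₀,p₁)`, and the same inequality at `(p̄₁, p̄₀)` gives the
reverse one since the antipode is an involution.
-/

lemma nvec_add_pi (θ : ℝ) : nvec (θ + Real.pi) = -nvec θ := by
  simp [nvec, Real.cos_add_pi, Real.sin_add_pi]

lemma antipode_antipode (p : Pt) : antipode (antipode p) = p := by
  simp [antipode]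

namespace PiecewiseC1

variable {E : Type*} [NormedAddCommGroup E] [NormedSpace ℝ E] {f : ℝ → E}

lemma comp_one_sub (hf : PiecewiseC1 f) : PiecewiseC1 (fun t => f (1 - t)) := by
  obtain ⟨hcont, s, hs⟩ := hf
  refine ⟨hcont.comp (by fun_prop) fun t ht => Icc.mem_iff_one_sub_mem.mp ht,
    s.image (1 - ·), ?_⟩
  rintro t ⟨ht, hts⟩
  have hreflect : 1 - t ∈ Icc (0 : ℝ) 1 \ (s : Set ℝ) :=
    ⟨Icc.mem_iff_one_sub_mem.mp ht, fun hmem => hts (by simpa using ⟨1 - t, hmem, by ring⟩)⟩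
  obtain ⟨hdiff, hderiv⟩ := hs _ hreflect
  refine ⟨differentiableAt_comp_const_sub.mpr hdiff, ?_⟩
  have hderiv_eq : deriv (fun u => f (1 - u)) = fun u => -deriv f (1 - u) :=
    funext fun u => deriv_comp_const_sub ..
  rw [hderiv_eq]
  exact (hderiv.comp (by fun_prop)).neg

lemma add_const (hf : PiecewiseC1 f) (c : E) : PiecewiseC1 (fun t => f t + c) := by
  obtain ⟨hcont, s, hs⟩ := hf
  refine ⟨hcont.add continuousOn_const, s, fun t ht => ?_⟩
  rw [deriv_add_const']
  exact ⟨(hs t ht).1.add_const c, (hs t ht).2⟩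

end PiecewiseC1

namespace Curve

def reverseAntipode (γ : Curve) : Curve :=
  ⟨fun t => γ.x (1 - t), fun t => γ.th (1 - t) + Real.pi⟩

variable {γ : Curve}

lemma u1_reverseAntipode (γ : Curve) (t : ℝ) : γ.reverseAntipode.u1 t = γ.u1 (1 - t) := by
  simp only [u1, reverseAntipode, deriv_comp_const_sub, nvec_add_pi, dot,
    Prod.fst_neg, Prod.snd_neg]
  ring

lemma u3_reverseAntipode (γ : Curve) (t : ℝ) : γ.reverseAntipode.u3 t = -γ.u3 (1 - t) := by
  simp only [u3, reverseAntipode, deriv_add_const, deriv_comp_const_sub]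

lemma Admissible.reverseAntipode (hγ : γ.Admissible) : γ.reverseAntipode.Admissible :=
  ⟨hγ.1.comp_one_sub, hγ.2.comp_one_sub.add_const _⟩

lemma Horizontal.reverseAntipode (hγ : γ.Horizontal) : γ.reverseAntipode.Horizontal := by
  intro t ht hdiff
  obtain ⟨c, hc⟩ := hγ (1 - t) (Icc.mem_iff_one_sub_mem.mp ht)
    (differentiableAt_comp_const_sub.mp hdiff)
  refine ⟨c, ?_⟩
  simp only [Curve.reverseAntipode, deriv_comp_const_sub, hc, nvec_add_pi, smul_neg]

lemma Joins.reverseAntipode {p₀ p₁ : Pt} (hγ : γ.Joins p₀ p₁) :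
    γ.reverseAntipode.Joins (antipode p₁) (antipode p₀) := by
  obtain ⟨hx₀, hx₁, hn₀, hn₁⟩ := hγ
  simp [Curve.reverseAntipode, Joins, antipode, nvec_add_pi, hx₀, hx₁, hn₀, hn₁]

lemma length_reverseAntipode (ξ : ℝ) {C : Pt → ℝ} (hsym : AntipodallySymmetric C)
    (γ : Curve) : length ξ C γ.reverseAntipode = length ξ C γ := by
  have hintegrand : ∀ t,
      C (γ.reverseAntipode.x t, nvec (γ.reverseAntipode.th t)) *
          Real.sqrt (ξ ^ 2 * γ.reverseAntipode.u1 t ^ 2 + γ.reverseAntipode.u3 t ^ 2) =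
        C (γ.x (1 - t), nvec (γ.th (1 - t))) *
          Real.sqrt (ξ ^ 2 * γ.u1 (1 - t) ^ 2 + γ.u3 (1 - t) ^ 2) := fun t => by
    rw [u1_reverseAntipode, u3_reverseAntipode, neg_sq]
    simp only [Curve.reverseAntipode, nvec_add_pi]
    rw [← hsym]
  simp only [length, hintegrand]
  simpa using intervalIntegral.integral_comp_sub_left
    (fun u => C (γ.x u, nvec (γ.th u)) * Real.sqrt (ξ ^ 2 * γ.u1 u ^ 2 + γ.u3 u ^ 2))
    (a := 0) (b := 1) 1

lemma reverseAntipode_mem_Gamma0plus {p₀ p₁ : Pt} (hγ : γ ∈ Gamma0plus p₀ p₁) :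
    γ.reverseAntipode ∈ Gamma0plus (antipode p₁) (antipode p₀) := by
  obtain ⟨⟨hadm, hhor, hjoins⟩, hu1⟩ := hγ
  refine ⟨⟨hadm.reverseAntipode, hhor.reverseAntipode, hjoins.reverseAntipode⟩,
    fun t ht hdiff => ?_⟩
  rw [u1_reverseAntipode]
  exact hu1 _ (Icc.mem_iff_one_sub_mem.mp ht) (differentiableAt_comp_const_sub.mp hdiff)

end Curve

lemma dF0plus_antipode_le (ξ : ℝ) {C : Pt → ℝ} (hsym : AntipodallySymmetric C) (p₀ p₁ : Pt) :
    dF0plus ξ C (antipode p₁) (antipode p₀) ≤ dF0plus ξ C p₀ p₁ :=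
  le_iInf₂ fun γ hγ => by
    rw [← Curve.length_reverseAntipode ξ hsym γ]
    exact iInf₂_le _ (Curve.reverseAntipode_mem_Gamma0plus hγ)

theorem antipodal_symmetry_dF0plus_general (ξ : ℝ) (C : Pt → ℝ) (hsym : AntipodallySymmetric C)
    (p₀ p₁ : Pt) : dF0plus ξ C p₀ p₁ = dF0plus ξ C (antipode p₁) (antipode p₀) := by
  refine le_antisymm ?_ (dF0plus_antipode_le ξ hsym p₀ p₁)
  simpa only [antipode_antipode] using dF0plus_antipode_le ξ hsym (antipode p₁) (antipode p₀)

/-- antipodal symmetry of the forward Finsler distance `d_F₀⁺`. -/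
theorem antipodal_symmetry_dF0plus (ξ δ : ℝ) (hξ : 0 < ξ) (hδ : 0 < δ)
    (C : Pt → ℝ) (hC : Continuous C) (hCδ : ∀ q, δ ≤ C q)
    (hsym : AntipodallySymmetric C) (p₀ p₁ : Pt) :
    dF0plus ξ C p₀ p₁ = dF0plus ξ C (antipode p₁) (antipode p₀) :=
  antipodal_symmetry_dF0plus_general ξ C hsym p₀ p₁

end
end

section
/- Cusp-free model d_c as an optimization over sign-semidefinite lifted contours (Proposition 1, first part): If the cost function C is antipodally symmetric, then for all classes [p₀], [p₁] in the projective line bundle one has d_c([p₀],[p₁]) = inf{L(γ) : γ ∈ Γᶜ([p₀],[p₁])}, where Γᶜ([p₀],[p₁]) := ⋃_{q₀ ∈ [p₀], q₁ ∈ [p₁]} ( Γ₀⁺(q₀,q₁) ∪ Γ₀⁻(q₀,q₁) ) is the set of horizontal candidate curves between representatives of the two classes whose spatial control is either nonnegative almost everywhere or nonpositive almost everywhere. -/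
open Set MeasureTheory
open scoped ENNReal

noncomputable section

/-- Shift the angular part by `π`, reversing the orientation vector. -/
def shiftPi (γ : Curve) : Curve := ⟨γ.x, fun t => γ.th t + Real.pi⟩

lemma deriv_th_shift (γ : Curve) (t : ℝ) : deriv (shiftPi γ).th t = deriv γ.th t := by
  simp only [shiftPi]
  exact deriv_add_const _

lemma piecewiseC1_shift {f : ℝ → ℝ} (hf : PiecewiseC1 f) :
    PiecewiseC1 (fun t => f t + Real.pi) := by
  obtain ⟨hc, s, hs⟩ := hf
  refine ⟨hc.add continuousOn_const, s, fun t ht => ?_⟩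
  obtain ⟨hd, hcd⟩ := hs t ht
  refine ⟨hd.add_const _, ?_⟩
  have h : deriv (fun t => f t + Real.pi) = deriv f := funext fun t => deriv_add_const _
  rw [h]; exact hcd

lemma u1_shift (γ : Curve) (t : ℝ) : (shiftPi γ).u1 t = -γ.u1 t := by
  simp only [Curve.u1, shiftPi, dot, nvec, Real.cos_add_pi, Real.sin_add_pi]
  ring

lemma u3_shift (γ : Curve) (t : ℝ) : (shiftPi γ).u3 t = γ.u3 t := by
  simp only [Curve.u3]
  exact deriv_th_shift γ t

lemma shift_mem_Gamma0 {q₀ q₁ : Pt} {γ : Curve} (h : γ ∈ Gamma0 q₀ q₁) :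
    shiftPi γ ∈ Gamma0 (antipode q₀) (antipode q₁) := by
  obtain ⟨⟨hx, hth⟩, hhor, hj₀, hj₁, hn₀, hn₁⟩ := h
  refine ⟨⟨hx, piecewiseC1_shift hth⟩, ?_, hj₀, hj₁, ?_, ?_⟩
  · intro t ht hdiff
    obtain ⟨c, hc⟩ := hhor t ht hdiff
    refine ⟨-c, ?_⟩
    show deriv γ.x t = (-c) • nvec (γ.th t + Real.pi)
    rw [nvec_add_pi, smul_neg, neg_smul, neg_neg, hc]
  · show nvec (γ.th 0 + Real.pi) = (antipode q₀).2
    rw [nvec_add_pi, hn₀]; rfl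
  · show nvec (γ.th 1 + Real.pi) = (antipode q₁).2
    rw [nvec_add_pi, hn₁]; rfl

lemma shift_mem_plus {q₀ q₁ : Pt} {γ : Curve} (h : γ ∈ Gamma0minus q₀ q₁) :
    shiftPi γ ∈ Gamma0plus (antipode q₀) (antipode q₁) := by
  refine ⟨shift_mem_Gamma0 h.1, fun t ht hdiff => ?_⟩
  rw [u1_shift]
  have := h.2 t ht hdiff
  linarith

lemma shift_mem_minus {q₀ q₁ : Pt} {γ : Curve} (h : γ ∈ Gamma0plus q₀ q₁) :
    shiftPi γ ∈ Gamma0minus (antipode q₀) (antipode q₁) := by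
  refine ⟨shift_mem_Gamma0 h.1, fun t ht hdiff => ?_⟩
  rw [u1_shift]
  have := h.2 t ht hdiff
  linarith

lemma length_shift (ξ : ℝ) (C : Pt → ℝ) (hsym : AntipodallySymmetric C) (γ : Curve) :
    length ξ C (shiftPi γ) = length ξ C γ := by
  unfold length
  congr 1
  funext t
  rw [u1_shift, u3_shift, neg_sq]
  congr 1
  show C (γ.x t, nvec (γ.th t + Real.pi)) = C (γ.x t, nvec (γ.th t))
  rw [nvec_add_pi, ← hsym]

lemma dF0minus_eq_dF0plus (ξ : ℝ) (C : Pt → ℝ) (hsym : AntipodallySymmetric C)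
    (q₀ q₁ : Pt) :
    dF0minus ξ C q₀ q₁ = dF0plus ξ C (antipode q₀) (antipode q₁) := by
  apply le_antisymm
  · refine le_iInf₂ fun γ hγ => ?_
    have h2 := shift_mem_minus hγ
    rw [antipode_antipode, antipode_antipode] at h2
    calc dF0minus ξ C q₀ q₁ ≤ ENNReal.ofReal (length ξ C (shiftPi γ)) := iInf₂_le _ h2
      _ = ENNReal.ofReal (length ξ C γ) := by rw [length_shift ξ C hsym]
  · refine le_iInf₂ fun γ hγ => ?_
    have h2 := shift_mem_plus hγ
    calc dF0plus ξ C (antipode q₀) (antipode q₁)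
        ≤ ENNReal.ofReal (length ξ C (shiftPi γ)) := iInf₂_le _ h2
      _ = ENNReal.ofReal (length ξ C γ) := by rw [length_shift ξ C hsym]

lemma min_inf_rearrange {α : Type*} [LinearOrder α] (X Y Z W : α) :
    min (min X Y) (min Z W) = (((X ⊓ W) ⊓ (Y ⊓ Z)) ⊓ (Z ⊓ Y)) ⊓ (W ⊓ X) := by
  have hX : min (min X Y) (min Z W) ≤ X := (min_le_left _ _).trans (min_le_left _ _)
  have hY : min (min X Y) (min Z W) ≤ Y := (min_le_left _ _).trans (min_le_right _ _)
  have hZ : min (min X Y) (min Z W) ≤ Z := (min_le_right _ _).trans (min_le_left _ _)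
  have hW : min (min X Y) (min Z W) ≤ W := (min_le_right _ _).trans (min_le_right _ _)
  have hX' : (((X ⊓ W) ⊓ (Y ⊓ Z)) ⊓ (Z ⊓ Y)) ⊓ (W ⊓ X) ≤ X :=
    inf_le_left.trans (inf_le_left.trans (inf_le_left.trans inf_le_left))
  have hY' : (((X ⊓ W) ⊓ (Y ⊓ Z)) ⊓ (Z ⊓ Y)) ⊓ (W ⊓ X) ≤ Y :=
    inf_le_left.trans (inf_le_left.trans (inf_le_right.trans inf_le_left))
  have hZ' : (((X ⊓ W) ⊓ (Y ⊓ Z)) ⊓ (Z ⊓ Y)) ⊓ (W ⊓ X) ≤ Z :=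
    inf_le_left.trans (inf_le_left.trans (inf_le_right.trans inf_le_right))
  have hW' : (((X ⊓ W) ⊓ (Y ⊓ Z)) ⊓ (Z ⊓ Y)) ⊓ (W ⊓ X) ≤ W :=
    inf_le_left.trans (inf_le_left.trans (inf_le_left.trans inf_le_right))
  exact le_antisymm
    (le_inf (le_inf (le_inf (le_inf hX hW) (le_inf hY hZ)) (le_inf hZ hY)) (le_inf hW hX))
    (le_min (le_min hX' hY') (le_min hZ' hW'))

/-- `d_c` as an optimization over sign-semidefinite lifted contours. -/
theorem dc_eq_inf_over_GammaC (ξ δ : ℝ) (hξ : 0 < ξ) (hδ : 0 < δ)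
    (C : Pt → ℝ) (hC : Continuous C) (hCδ : ∀ q, δ ≤ C q)
    (hsym : AntipodallySymmetric C) (p₀ p₁ : Pt) :
    dc ξ C p₀ p₁ = ⨅ γ ∈ GammaC p₀ p₁, ENNReal.ofReal (length ξ C γ) := by
  have hrhs : (⨅ γ ∈ GammaC p₀ p₁, ENNReal.ofReal (length ξ C γ)) =
      (((dF0plus ξ C p₀ p₁ ⊓ dF0minus ξ C p₀ p₁) ⊓
        (dF0plus ξ C p₀ (antipode p₁) ⊓ dF0minus ξ C p₀ (antipode p₁))) ⊓
        (dF0plus ξ C (antipode p₀) p₁ ⊓ dF0minus ξ C (antipode p₀) p₁)) ⊓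
        (dF0plus ξ C (antipode p₀) (antipode p₁) ⊓
          dF0minus ξ C (antipode p₀) (antipode p₁)) := by
    simp only [GammaC, iInf_union]
    rfl
  rw [hrhs, dF0minus_eq_dF0plus ξ C hsym, dF0minus_eq_dF0plus ξ C hsym,
    dF0minus_eq_dF0plus ξ C hsym, dF0minus_eq_dF0plus ξ C hsym,
    antipode_antipode, antipode_antipode]
  unfold dc
  exact min_inf_rearrange (dF0plus ξ C p₀ p₁) (dF0plus ξ C p₀ (antipode p₁))
    (dF0plus ξ C (antipode p₀) p₁) (dF0plus ξ C (antipode p₀) (antipode p₁))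

end
end

section
/- Reduction from eight to four instances for d_c: If the cost function C is antipodally symmetric, then for all classes [p₀], [p₁] in the projective line bundle, the minimum of d_F₀⁺(q₀,q₁) over all eight directed pairs (i.e. over q₀ ∈ [p₀], q₁ ∈ [p₁] taken in both orders: min over q₀, q₁ of min{d_F₀⁺(q₀,q₁), d_F₀⁺(q₁,q₀)}) equals the minimum over only the four forward instances, min{d_F₀⁺(p₀,p₁), d_F₀⁺(p₀,p̄₁), d_F₀⁺(p̄₀,p₁), d_F₀⁺(p̄₀,p̄₁)} = d_c([p₀],[p₁]). -/
open Set MeasureTheory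
open scoped ENNReal

noncomputable section

section Aux

/-- Time reversal composed with θ-shift by π. -/
def Rev (γ : Curve) : Curve := ⟨fun t => γ.x (1 - t), fun t => γ.th (1 - t) + Real.pi⟩

lemma deriv_rev_x (γ : Curve) (t : ℝ) : deriv (Rev γ).x t = -deriv γ.x (1 - t) :=
  deriv_comp_const_sub γ.x 1 t

lemma deriv_rev_th (γ : Curve) (t : ℝ) : deriv (Rev γ).th t = -deriv γ.th (1 - t) := by
  show deriv (fun s => γ.th (1 - s) + Real.pi) t = _
  rw [deriv_add_const, deriv_comp_const_sub]

lemma rev_u1 (γ : Curve) (t : ℝ) : (Rev γ).u1 t = γ.u1 (1 - t) := by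
  unfold Curve.u1
  rw [deriv_rev_x]
  show dot _ (nvec (γ.th (1 - t) + Real.pi)) = _
  rw [nvec_add_pi]
  show dot (-(deriv γ.x (1 - t))) (-(nvec (γ.th (1 - t)))) = _
  simp only [dot, Prod.fst_neg, Prod.snd_neg, neg_mul_neg]

lemma one_sub_mem {t : ℝ} (ht : t ∈ Set.Icc (0:ℝ) 1) : (1 - t) ∈ Set.Icc (0:ℝ) 1 := by
  constructor <;> [linarith [ht.2]; linarith [ht.1]]

lemma piecewiseC1_comp_one_sub {E : Type*} [NormedAddCommGroup E] [NormedSpace ℝ E]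
    {f : ℝ → E} (hf : PiecewiseC1 f) : PiecewiseC1 (fun s => f (1 - s)) := by
  obtain ⟨hc, s, hs⟩ := hf
  refine ⟨?_, s.image (fun a => 1 - a), ?_⟩
  · exact hc.comp (Continuous.continuousOn (by continuity)) (fun t ht => one_sub_mem ht)
  · intro t ht
    have h1 : (1 - t) ∈ Set.Icc (0:ℝ) 1 \ (s : Set ℝ) := by
      refine ⟨one_sub_mem ht.1, fun hmem => ht.2 ?_⟩
      exact Finset.mem_image.2 ⟨1 - t, hmem, by ring⟩
    obtain ⟨hd, hcd⟩ := hs _ h1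
    refine ⟨differentiableAt_comp_const_sub.2 hd, ?_⟩
    have : deriv (fun s => f (1 - s)) = fun u => -deriv f (1 - u) :=
      funext fun u => deriv_comp_const_sub f 1 u
    rw [this]
    exact (hcd.comp (by fun_prop)).neg

lemma piecewiseC1_add_const {f : ℝ → ℝ} (c : ℝ) (hf : PiecewiseC1 f) :
    PiecewiseC1 (fun s => f s + c) := by
  obtain ⟨hc, s, hs⟩ := hf
  refine ⟨hc.add continuousOn_const, s, fun t ht => ?_⟩
  obtain ⟨hd, hcd⟩ := hs t ht
  refine ⟨hd.add_const c, ?_⟩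
  rw [deriv_add_const' c]
  exact hcd

lemma rev_mem_gamma0plus {q₀ q₁ : Pt} {γ : Curve} (hγ : γ ∈ Gamma0plus q₀ q₁) :
    Rev γ ∈ Gamma0plus (antipode q₁) (antipode q₀) := by
  obtain ⟨⟨⟨hax, hath⟩, hhor, hj⟩, hpos⟩ := hγ
  refine ⟨⟨⟨piecewiseC1_comp_one_sub hax, piecewiseC1_add_const _ (piecewiseC1_comp_one_sub hath)⟩,
    ?_, ?_⟩, ?_⟩
  · intro t ht hd
    have hd' : DifferentiableAt ℝ γ.x (1 - t) := differentiableAt_comp_const_sub.1 hd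
    obtain ⟨c, hc⟩ := hhor (1 - t) (one_sub_mem ht) hd'
    refine ⟨c, ?_⟩
    show deriv (Rev γ).x t = c • nvec (γ.th (1 - t) + Real.pi)
    rw [deriv_rev_x, hc, nvec_add_pi, smul_neg]
  · obtain ⟨h0, h1, hn0, hn1⟩ := hj
    refine ⟨?_, ?_, ?_, ?_⟩
    · show γ.x (1 - 0) = q₁.1; rw [show (1:ℝ) - 0 = 1 by norm_num, h1]
    · show γ.x (1 - 1) = q₀.1; rw [show (1:ℝ) - 1 = 0 by norm_num, h0]
    · show nvec (γ.th (1 - 0) + Real.pi) = -q₁.2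
      rw [nvec_add_pi, show (1:ℝ) - 0 = 1 by norm_num, hn1]
    · show nvec (γ.th (1 - 1) + Real.pi) = -q₀.2
      rw [nvec_add_pi, show (1:ℝ) - 1 = 0 by norm_num, hn0]
  · intro t ht hd
    rw [rev_u1]
    exact hpos (1 - t) (one_sub_mem ht) (differentiableAt_comp_const_sub.1 hd)

lemma length_rev (ξ : ℝ) (C : Pt → ℝ) (hsym : AntipodallySymmetric C) (γ : Curve) :
    length ξ C (Rev γ) = length ξ C γ := by
  have hint : ∀ t, C ((Rev γ).x t, nvec ((Rev γ).th t)) *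
      Real.sqrt (ξ ^ 2 * (Rev γ).u1 t ^ 2 + (Rev γ).u3 t ^ 2)
      = C (γ.x (1 - t), nvec (γ.th (1 - t))) *
        Real.sqrt (ξ ^ 2 * γ.u1 (1 - t) ^ 2 + γ.u3 (1 - t) ^ 2) := by
    intro t
    have h1 : (Rev γ).u3 t ^ 2 = γ.u3 (1 - t) ^ 2 := by
      unfold Curve.u3; rw [deriv_rev_th]; ring
    have h2 : nvec ((Rev γ).th t) = -nvec (γ.th (1 - t)) := nvec_add_pi _
    rw [rev_u1, h1, h2]
    congr 1
    exact (hsym (γ.x (1 - t)) (nvec (γ.th (1 - t)))).symm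
  unfold length
  simp_rw [hint]
  have := intervalIntegral.integral_comp_sub_left (a := (0:ℝ)) (b := 1)
    (fun t => C (γ.x t, nvec (γ.th t)) * Real.sqrt (ξ ^ 2 * γ.u1 t ^ 2 + γ.u3 t ^ 2)) 1
  simpa using this

lemma dF0plus_rev_le (ξ : ℝ) (C : Pt → ℝ) (hsym : AntipodallySymmetric C) (q₀ q₁ : Pt) :
    dF0plus ξ C (antipode q₁) (antipode q₀) ≤ dF0plus ξ C q₀ q₁ := by
  refine le_iInf₂ fun γ hγ => ?_
  calc dF0plus ξ C (antipode q₁) (antipode q₀)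
      ≤ ENNReal.ofReal (length ξ C (Rev γ)) := iInf₂_le (Rev γ) (rev_mem_gamma0plus hγ)
    _ = ENNReal.ofReal (length ξ C γ) := by rw [length_rev ξ C hsym]

lemma min_shuffle {α : Type*} [LinearOrder α] (A B C D : α) :
    min (min (min A D) (min B C)) (min (min C B) (min D A)) = min (min A B) (min C D) := by
  apply le_antisymm <;>
    simp only [le_min_iff, min_le_iff, le_refl, true_or, or_true, and_true, true_and] <;>
    tauto

lemma dF0plus_rev (ξ : ℝ) (C : Pt → ℝ) (hsym : AntipodallySymmetric C) (q₀ q₁ : Pt) :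
    dF0plus ξ C q₀ q₁ = dF0plus ξ C (antipode q₁) (antipode q₀) := by
  refine le_antisymm ?_ (dF0plus_rev_le ξ C hsym q₀ q₁)
  have := dF0plus_rev_le ξ C hsym (antipode q₁) (antipode q₀)
  rwa [antipode_antipode, antipode_antipode] at this

end Aux

/-- the minimum over all eight directed pairs equals the minimum over
the four forward instances, i.e. `d_c`. -/
theorem eight_pairs_reduce_to_four (ξ δ : ℝ) (hξ : 0 < ξ) (hδ : 0 < δ)
    (C : Pt → ℝ) (hC : Continuous C) (hCδ : ∀ q, δ ≤ C q)
    (hsym : AntipodallySymmetric C) (p₀ p₁ : Pt) :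
    min (min (min (dF0plus ξ C p₀ p₁) (dF0plus ξ C p₁ p₀))
             (min (dF0plus ξ C p₀ (antipode p₁)) (dF0plus ξ C (antipode p₁) p₀)))
        (min (min (dF0plus ξ C (antipode p₀) p₁) (dF0plus ξ C p₁ (antipode p₀)))
             (min (dF0plus ξ C (antipode p₀) (antipode p₁))
                  (dF0plus ξ C (antipode p₁) (antipode p₀)))) =
      dc ξ C p₀ p₁ :=  by
  have h1 := dF0plus_rev ξ C hsym p₁ p₀
  have h2 := dF0plus_rev ξ C hsym (antipode p₁) p₀
  have h3 := dF0plus_rev ξ C hsym p₁ (antipode p₀)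
  have h4 := dF0plus_rev ξ C hsym (antipode p₁) (antipode p₀)
  rw [antipode_antipode] at h2 h3
  rw [antipode_antipode p₀, antipode_antipode p₁] at h4
  rw [h1, h2, h3, h4, dc]
  exact min_shuffle _ _ _ _

end
end

section
/- Global controllability (Proposition 2, first part): For every pair of points p₀, p₁ of the space of positions and orientations there exists a horizontal candidate curve from p₀ to p₁ whose spatial control is nonnegative wherever defined, i.e. Γ₀⁺(p₀,p₁) ≠ ∅. Consequently d_F₀⁺(p₀,p₁) < ∞, and hence d_F₀(p₀,p₁), d_c([p₀],[p₁]) and d_proj([p₀],[p₁]) are all finite. -/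
open Set MeasureTheory
open scoped ENNReal

noncomputable section

/-!
Rotate on the spot from `θ₀` to the direction `α` of `x₁ - x₀`, drive straight along `n(α)`
to `x₁`, then rotate on the spot to `θ₁`. Performing the three moves on the three thirds of
`[0,1]` with smooth transitions makes the curve `C¹`; `ẋ` vanishes off the middle third, and
on the middle third `θ ≡ α`, so `ẋ` is everywhere a nonnegative multiple of `n(θ)`.
-/

lemma PiecewiseC1.of_contDiff {E : Type*} [NormedAddCommGroup E] [NormedSpace ℝ E]
    {f : ℝ → E} (hf : ContDiff ℝ 1 f) : PiecewiseC1 f :=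
  ⟨hf.continuous.continuousOn, ∅, fun t _ =>
    ⟨hf.differentiable one_ne_zero t, (hf.continuous_deriv le_rfl).continuousAt⟩⟩

lemma dot_smul_left (c : ℝ) (a b : ℝ × ℝ) : dot (c • a) b = c * dot a b := by
  simp only [dot, Prod.smul_fst, Prod.smul_snd, smul_eq_mul]
  ring

lemma dot_nvec_self (θ : ℝ) : dot (nvec θ) (nvec θ) = 1 := by
  simpa [dot, nvec, sq] using Real.cos_sq_add_sin_sq θ

lemma exists_nonneg_smul_nvec (v : ℝ × ℝ) : ∃ r α : ℝ, 0 ≤ r ∧ v = r • nvec α :=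
  let z : ℂ := ⟨v.1, v.2⟩
  ⟨‖z‖, z.arg, norm_nonneg z,
    Prod.ext (Complex.norm_mul_cos_arg z).symm (Complex.norm_mul_sin_arg z).symm⟩

def ramp (k t : ℝ) : ℝ := Real.smoothTransition (3 * t - k)

lemma contDiff_ramp (k : ℝ) {n : ℕ∞} : ContDiff ℝ n (ramp k) :=
  Real.smoothTransition.contDiff.comp ((contDiff_const.mul contDiff_id).sub contDiff_const)

lemma monotone_ramp (k : ℝ) : Monotone (ramp k) := fun _ _ h =>
  Real.smoothTransition.monotone (by linarith)

lemma ramp_eq_zero {k t : ℝ} (h : 3 * t ≤ k) : ramp k t = 0 :=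
  Real.smoothTransition.zero_of_nonpos (by linarith)

lemma ramp_eq_one {k t : ℝ} (h : k + 1 ≤ 3 * t) : ramp k t = 1 :=
  Real.smoothTransition.one_of_one_le (by linarith)

lemma deriv_ramp_eq_zero {k t : ℝ} (h : 3 * t < k ∨ k + 1 < 3 * t) : deriv (ramp k) t = 0 := by
  obtain ⟨c, hc⟩ : ∃ c : ℝ, ramp k =ᶠ[nhds t] fun _ => c := by
    rcases h with h | h
    · refine ⟨0, ?_⟩
      filter_upwards [Iio_mem_nhds (show t < k / 3 by linarith)] with s hs
      exact ramp_eq_zero (by linarith [mem_Iio.1 hs])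
    · refine ⟨1, ?_⟩
      filter_upwards [Ioi_mem_nhds (show (k + 1) / 3 < t by linarith)] with s hs
      exact ramp_eq_one (by linarith [mem_Ioi.1 hs])
  rw [hc.deriv_eq, deriv_const]

lemma mem_Gamma0plus_of_deriv_eq_smul {γ : Curve} {p₀ p₁ : Pt} (hγ : γ.Admissible)
    (hjoins : γ.Joins p₀ p₁)
    (hforward : ∀ t ∈ Icc (0 : ℝ) 1, ∃ c : ℝ, 0 ≤ c ∧ deriv γ.x t = c • nvec (γ.th t)) :
    γ ∈ Gamma0plus p₀ p₁ := by
  refine ⟨⟨hγ, fun t ht _ => ?_, hjoins⟩, fun t ht _ => ?_⟩ <;>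
    obtain ⟨c, hc, hx⟩ := hforward t ht
  · exact ⟨c, hx⟩
  · rwa [Curve.u1, hx, dot_smul_left, dot_nvec_self, mul_one]

namespace Curve

def turnDriveTurn (x₀ : ℝ × ℝ) (r θ₀ α θ₁ : ℝ) : Curve where
  x t := x₀ + (ramp 1 t * r) • nvec α
  th t := θ₀ + ramp 0 t * (α - θ₀) + ramp 2 t * (θ₁ - α)

variable (x₀ : ℝ × ℝ) {r : ℝ} (θ₀ α θ₁ : ℝ)

lemma contDiff_turnDriveTurn_x : ContDiff ℝ 1 (turnDriveTurn x₀ r θ₀ α θ₁).x :=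
  contDiff_const.add (((contDiff_ramp 1).mul contDiff_const).smul contDiff_const)

lemma contDiff_turnDriveTurn_th : ContDiff ℝ 1 (turnDriveTurn x₀ r θ₀ α θ₁).th :=
  (contDiff_const.add ((contDiff_ramp 0).mul contDiff_const)).add
    ((contDiff_ramp 2).mul contDiff_const)

lemma turnDriveTurn_admissible : (turnDriveTurn x₀ r θ₀ α θ₁).Admissible :=
  ⟨.of_contDiff (contDiff_turnDriveTurn_x ..), .of_contDiff (contDiff_turnDriveTurn_th ..)⟩

lemma deriv_turnDriveTurn_x (t : ℝ) :
    deriv (turnDriveTurn x₀ r θ₀ α θ₁).x t = (deriv (ramp 1) t * r) • nvec α :=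
  ((((contDiff_ramp 1).differentiable one_ne_zero t).hasDerivAt.mul_const r).smul_const
    (nvec α) |>.const_add x₀).deriv

lemma turnDriveTurn_th_of_mem_Icc {t : ℝ} (ht : t ∈ Icc (1 / 3 : ℝ) (2 / 3)) :
    (turnDriveTurn x₀ r θ₀ α θ₁).th t = α := by
  simp only [turnDriveTurn, ramp_eq_one (k := 0) (by linarith [ht.1]),
    ramp_eq_zero (k := 2) (by linarith [ht.2])]
  ring

lemma turnDriveTurn_joins :
    (turnDriveTurn x₀ r θ₀ α θ₁).Joins (x₀, nvec θ₀) (x₀ + r • nvec α, nvec θ₁) := by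
  refine ⟨?_, ?_, ?_, ?_⟩ <;>
    norm_num [turnDriveTurn, ramp, Real.smoothTransition.zero_of_nonpos,
      Real.smoothTransition.one_of_one_le]

lemma deriv_turnDriveTurn_x_eq_smul (hr : 0 ≤ r) (t : ℝ) :
    ∃ c : ℝ, 0 ≤ c ∧
      deriv (turnDriveTurn x₀ r θ₀ α θ₁).x t = c • nvec ((turnDriveTurn x₀ r θ₀ α θ₁).th t) := by
  rw [deriv_turnDriveTurn_x]
  by_cases ht : t ∈ Icc (1 / 3 : ℝ) (2 / 3)
  · rw [turnDriveTurn_th_of_mem_Icc x₀ θ₀ α θ₁ ht]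
    exact ⟨_, mul_nonneg (monotone_ramp 1).deriv_nonneg hr, rfl⟩
  · have hout : 3 * t < 1 ∨ 1 + 1 < 3 * t := by
      by_contra! h
      exact ht ⟨by linarith [h.1], by linarith [h.2]⟩
    exact ⟨0, le_rfl, by rw [deriv_ramp_eq_zero hout, zero_mul, zero_smul, zero_smul]⟩

lemma turnDriveTurn_mem_Gamma0plus (hr : 0 ≤ r) :
    turnDriveTurn x₀ r θ₀ α θ₁ ∈ Gamma0plus (x₀, nvec θ₀) (x₀ + r • nvec α, nvec θ₁) :=
  mem_Gamma0plus_of_deriv_eq_smul (turnDriveTurn_admissible ..) (turnDriveTurn_joins ..)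
    fun t _ => deriv_turnDriveTurn_x_eq_smul x₀ θ₀ α θ₁ hr t

end Curve

theorem Gamma0plus_nonempty {p₀ p₁ : Pt} (h₀ : ∃ θ : ℝ, nvec θ = p₀.2)
    (h₁ : ∃ θ : ℝ, nvec θ = p₁.2) : (Gamma0plus p₀ p₁).Nonempty := by
  obtain ⟨x₀, _⟩ := p₀
  obtain ⟨x₁, _⟩ := p₁
  obtain ⟨θ₀, rfl⟩ := h₀
  obtain ⟨θ₁, rfl⟩ := h₁
  obtain ⟨r, α, hr, hv⟩ := exists_nonneg_smul_nvec (x₁ - x₀)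
  obtain rfl : x₁ = x₀ + r • nvec α := by rw [← hv, add_sub_cancel]
  exact ⟨_, Curve.turnDriveTurn_mem_Gamma0plus x₀ θ₀ α θ₁ hr⟩

section Distances

variable (ξ : ℝ) (C : Pt → ℝ) (p₀ p₁ : Pt)

lemma dF0plus_lt_top_of_nonempty (h : (Gamma0plus p₀ p₁).Nonempty) : dF0plus ξ C p₀ p₁ < ⊤ :=
  let ⟨γ, hγ⟩ := h
  (iInf₂_le γ hγ).trans_lt ENNReal.ofReal_lt_top

lemma dF0_le_dF0plus : dF0 ξ C p₀ p₁ ≤ dF0plus ξ C p₀ p₁ :=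
  biInf_mono fun _ hγ => hγ.1

lemma dc_le_dF0plus : dc ξ C p₀ p₁ ≤ dF0plus ξ C p₀ p₁ :=
  (min_le_left _ _).trans (min_le_left _ _)

lemma dproj_le_dF0 : dproj ξ C p₀ p₁ ≤ dF0 ξ C p₀ p₁ :=
  (min_le_left _ _).trans (min_le_left _ _)

end Distances

theorem global_controllability_general (ξ : ℝ)
    (C : Pt → ℝ)
    (p₀ p₁ : Pt) (h₀ : ∃ θ : ℝ, nvec θ = p₀.2) (h₁ : ∃ θ : ℝ, nvec θ = p₁.2) :
    (Gamma0plus p₀ p₁).Nonempty ∧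
    dF0plus ξ C p₀ p₁ < ⊤ ∧
    dF0 ξ C p₀ p₁ < ⊤ ∧
    dc ξ C p₀ p₁ < ⊤ ∧
    dproj ξ C p₀ p₁ < ⊤ := by
  have hne := Gamma0plus_nonempty h₀ h₁
  have hplus := dF0plus_lt_top_of_nonempty ξ C p₀ p₁ hne
  have hzero := (dF0_le_dF0plus ξ C p₀ p₁).trans_lt hplus
  exact ⟨hne, hplus, hzero, (dc_le_dF0plus ξ C p₀ p₁).trans_lt hplus,
    (dproj_le_dF0 ξ C p₀ p₁).trans_lt hzero⟩

/-- global controllability. -/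
theorem global_controllability (ξ δ : ℝ) (hξ : 0 < ξ) (hδ : 0 < δ)
    (C : Pt → ℝ) (hC : Continuous C) (hCδ : ∀ q, δ ≤ C q)
    (p₀ p₁ : Pt) (h₀ : ∃ θ : ℝ, nvec θ = p₀.2) (h₁ : ∃ θ : ℝ, nvec θ = p₁.2) :
    (Gamma0plus p₀ p₁).Nonempty ∧
    dF0plus ξ C p₀ p₁ < ⊤ ∧
    dF0 ξ C p₀ p₁ < ⊤ ∧
    dc ξ C p₀ p₁ < ⊤ ∧
    dproj ξ C p₀ p₁ < ⊤ :=
  global_controllability_general ξ C p₀ p₁ h₀ h₁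

end
end

section
/- Dual Finsler function of the forward Reeds–Shepp model (Eq. (H0plus)): Fix ξ > 0 and c > 0, and for a ∈ ℝ write (a)₊ := max{a, 0}. Then for all real numbers a, b: sup{ (a·u¹ + b·u³) / ( c·√(ξ²·(u¹)² + (u³)²) ) : (u¹, u³) ∈ ℝ², u¹ ≥ 0, (u¹, u³) ≠ (0, 0) } = (1/c)·√( ξ⁻²·((a)₊)² + b² ). -/
/-! Since `u¹ ≥ 0`, one may replace `a` by `(a)₊` in the numerator. Writing
`(a)₊ u¹ + b u³ = (ξ⁻¹ (a)₊)(ξ u¹) + b u³`, Cauchy–Schwarz bounds the quotient by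
`(1/c) √(ξ⁻² (a)₊² + b²)`, with equality at `(u¹, u³) = (ξ⁻² (a)₊, b)`, an admissible
direction; when this direction vanishes the bound is `0`, attained at `(0, 1)`. -/

open Set MeasureTheory
open scoped ENNReal

noncomputable section

open Real

lemma mul_add_mul_le_sqrt_mul_sqrt (x₁ x₂ y₁ y₂ : ℝ) :
    x₁ * y₁ + x₂ * y₂ ≤ √(x₁ ^ 2 + x₂ ^ 2) * √(y₁ ^ 2 + y₂ ^ 2) := by
  simpa [Fin.sum_univ_two] using
    Real.sum_mul_le_sqrt_mul_sqrt Finset.univ ![x₁, x₂] ![y₁, y₂]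

lemma mul_max_zero_self (a : ℝ) : a * max a 0 = max a 0 ^ 2 := by
  rcases le_total a 0 with h | h
  · simp [max_eq_right h]
  · rw [max_eq_left h, sq]

lemma weighted_sq_add_sq_pos {ξ w₁ w₃ : ℝ} (hξ : ξ ≠ 0) (hw : (w₁, w₃) ≠ (0, 0)) :
    0 < ξ ^ 2 * w₁ ^ 2 + w₃ ^ 2 := by
  rcases eq_or_ne w₁ 0 with rfl | h₁
  · have h₃ : w₃ ≠ 0 := fun h ↦ hw (by rw [h])
    simpa using sq_pos_of_ne_zero h₃
  · positivity

lemma mul_add_mul_le_sqrt_posPart {ξ a b w₁ : ℝ} (hξ : ξ ≠ 0) (hw₁ : 0 ≤ w₁) (w₃ : ℝ) :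
    a * w₁ + b * w₃ ≤ √(ξ⁻¹ ^ 2 * max a 0 ^ 2 + b ^ 2) * √(ξ ^ 2 * w₁ ^ 2 + w₃ ^ 2) :=
  calc a * w₁ + b * w₃ ≤ max a 0 * w₁ + b * w₃ := by gcongr; exact le_max_left a 0
    _ = (ξ⁻¹ * max a 0) * (ξ * w₁) + b * w₃ := by field_simp
    _ ≤ √((ξ⁻¹ * max a 0) ^ 2 + b ^ 2) * √((ξ * w₁) ^ 2 + w₃ ^ 2) :=
        mul_add_mul_le_sqrt_mul_sqrt _ _ _ _
    _ = √(ξ⁻¹ ^ 2 * max a 0 ^ 2 + b ^ 2) * √(ξ ^ 2 * w₁ ^ 2 + w₃ ^ 2) := by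
        simp only [mul_pow]

lemma quotient_at_maximizer {ξ : ℝ} (hξ : ξ ≠ 0) (c a b : ℝ) :
    (a * (ξ⁻¹ ^ 2 * max a 0) + b * b) /
        (c * √(ξ ^ 2 * (ξ⁻¹ ^ 2 * max a 0) ^ 2 + b ^ 2)) =
      1 / c * √(ξ⁻¹ ^ 2 * max a 0 ^ 2 + b ^ 2) := by
  have hnum : a * (ξ⁻¹ ^ 2 * max a 0) + b * b = ξ⁻¹ ^ 2 * max a 0 ^ 2 + b ^ 2 := by
    rw [← mul_max_zero_self]; ring
  have hden : ξ ^ 2 * (ξ⁻¹ ^ 2 * max a 0) ^ 2 + b ^ 2 = ξ⁻¹ ^ 2 * max a 0 ^ 2 + b ^ 2 := by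
    field_simp
  rw [hnum, hden, mul_comm c, ← div_div, div_sqrt, div_eq_inv_mul, one_div]

/-- dual Finsler function of the forward Reeds–Shepp model. -/
theorem dual_finsler_forward (ξ c : ℝ) (hξ : 0 < ξ) (hc : 0 < c) (a b : ℝ) :
    sSup {v : ℝ | ∃ w₁ w₃ : ℝ, 0 ≤ w₁ ∧ (w₁, w₃) ≠ (0, 0) ∧
        v = (a * w₁ + b * w₃) / (c * Real.sqrt (ξ ^ 2 * w₁ ^ 2 + w₃ ^ 2))} =
      (1 / c) * Real.sqrt (ξ⁻¹ ^ 2 * max a 0 ^ 2 + b ^ 2) := by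
  refine IsGreatest.csSup_eq ⟨?attained, ?bound⟩
  case attained =>
    by_cases hw : (ξ⁻¹ ^ 2 * max a 0, b) = (0, 0)
    · obtain ⟨hξm, rfl⟩ := Prod.mk.inj hw
      have hm : max a 0 = 0 := by simpa [hξ.ne'] using hξm
      exact ⟨0, 1, le_rfl, by simp, by simp [hm]⟩
    · exact ⟨_, _, by positivity, hw, (quotient_at_maximizer hξ.ne' c a b).symm⟩
  case bound =>
    rintro _ ⟨w₁, w₃, hw₁, hw, rfl⟩
    have hr := sqrt_pos.2 (weighted_sq_add_sq_pos hξ.ne' hw)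
    rw [div_le_iff₀ (by positivity), one_div_mul_eq_div, div_mul_eq_mul_div, mul_left_comm,
      mul_div_cancel_left₀ _ hc.ne']
    exact mul_add_mul_le_sqrt_posPart hξ.ne' hw₁ w₃

end
end
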